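/- Let E ⊆ (ℕ⁺)ⁿ × (ℕ⁺)ⁿ be an equivalence relation on (ℕ⁺)ⁿ that is ∅-definable (as a subset of (ℕ⁺)^{2n}). Then for every ā ∈ (ℕ⁺)ⁿ there exists ā' ∈ (ℕ⁺)ⁿ with E(ā, ā') and σ(ā) ∩ σ(ā') = ⋂_{b̄ : E(ā, b̄)} σ(b̄). -/

import Mathlib

/-!
A `∅`-definable relation is invariant under every automorphism of `(ℕ+, ·, 1)`, and every
permutation of the primes induces one. Suppose a prime `p` lies in `σ(ā) ∩ σ(b̄)` for some
`b̄ ~ ā`, but not in `σ(c̄)` for some `c̄ ~ ā`. Swapping `p` with a prime `q` dividing none of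
`ā, b̄, c̄` fixes `c̄`, hence maps `b̄` to a tuple still equivalent to `ā` (through `c̄`), whose
support meets `σ(ā)` in `σ(ā) ∩ σ(b̄)` minus `p`. Starting from `b̄ = ā` and removing the
finitely many primes of `σ(ā)` outside `⋂_{b̄ ~ ā} σ(b̄)` one at a time yields `ā'`.
-/

open FirstOrder Language

/-- The language `L` with one binary function symbol `·` and one constant symbol `1`. -/
def L : FirstOrder.Language :=
  ⟨fun n => match n with | 0 => Unit | 2 => Unit | _ => Empty, fun _ => Empty⟩

/-- Any monoid is an `L`-structure, with `·` interpreted as multiplication and `1` as the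
identity. In particular `ℕ+` is the standard model of Skolem arithmetic, and
`Multiplicative ℕ` is the additive `L`-structure `(ℕ, +, 0)`. -/
instance (M : Type*) [Monoid M] : L.Structure M where
  funMap {n} f x :=
    match n, f, x with
    | 0, _, _ => 1
    | 2, _, x => x 0 * x 1
  RelMap r _ := r.elim

/-- The support of a tuple: the set of primes dividing some component. -/
def PSupp {n : ℕ} (a : Fin n → ℕ+) : Set ℕ := {p | p.Prime ∧ ∃ i, p ∣ (a i : ℕ)}

namespace PrimeMultiset

-- `Multiset.map` would land in `Multiset Nat.Primes`, where the `PrimeMultiset` API fails to apply.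
def map (e : Nat.Primes ≃ Nat.Primes) (v : PrimeMultiset) : PrimeMultiset :=
  Multiset.map e v

theorem map_add (e : Nat.Primes ≃ Nat.Primes) (u v : PrimeMultiset) :
    (u + v).map e = u.map e + v.map e :=
  Multiset.map_add _ _ _

@[simp]
theorem map_symm_map (e : Nat.Primes ≃ Nat.Primes) (v : PrimeMultiset) :
    (v.map e).map e.symm = v :=
  (Multiset.map_map _ _ _).trans (by rw [e.symm_comp_self]; exact Multiset.map_id _)

@[simp]
theorem map_map_symm (e : Nat.Primes ≃ Nat.Primes) (v : PrimeMultiset) :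
    (v.map e.symm).map e = v :=
  map_symm_map e.symm v

theorem count_map (e : Nat.Primes ≃ Nat.Primes) (v : PrimeMultiset) (p : Nat.Primes) :
    (v.map e).count p = v.count (e.symm p) := by
  conv_lhs => rw [← e.apply_symm_apply p]
  exact Multiset.count_map_eq_count' e _ e.injective _

theorem map_eq_self (e : Nat.Primes ≃ Nat.Primes) {v : PrimeMultiset}
    (h : ∀ p, v.count p ≠ 0 → e p = p) : v.map e = v :=
  (Multiset.map_congr rfl fun p hp => h p (Multiset.count_ne_zero.2 hp)).trans (Multiset.map_id _)

end PrimeMultiset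

namespace PNat

def mapPrimes (e : Nat.Primes ≃ Nat.Primes) : ℕ+ ≃* ℕ+ where
  toFun m := (m.factorMultiset.map e).prod
  invFun m := (m.factorMultiset.map e.symm).prod
  left_inv m := by simp
  right_inv m := by simp
  map_mul' m k := by simp [factorMultiset_mul, PrimeMultiset.map_add, PrimeMultiset.prod_add]

theorem coe_dvd_iff_count_ne_zero {p : Nat.Primes} {m : ℕ+} :
    (p : ℕ+) ∣ m ↔ m.factorMultiset.count p ≠ 0 := by
  simpa [Nat.one_le_iff_ne_zero] using count_factorMultiset m p 1

theorem coe_dvd_mapPrimes_iff (e : Nat.Primes ≃ Nat.Primes) {p : Nat.Primes} {m : ℕ+} :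
    (p : ℕ+) ∣ mapPrimes e m ↔ (e.symm p : ℕ+) ∣ m := by
  simp [coe_dvd_iff_count_ne_zero, mapPrimes, PrimeMultiset.count_map]

theorem mapPrimes_apply_eq_self (e : Nat.Primes ≃ Nat.Primes) {m : ℕ+}
    (h : ∀ p : Nat.Primes, (p : ℕ+) ∣ m → e p = p) : mapPrimes e m = m := by
  conv_rhs => rw [← prod_factorMultiset m]
  exact congrArg PrimeMultiset.prod
    (PrimeMultiset.map_eq_self e fun p hp => h p (coe_dvd_iff_count_ne_zero.2 hp))

end PNat

def MulEquiv.toLEquiv {M N : Type*} [Monoid M] [Monoid N] (τ : M ≃* N) : L.Equiv M N where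
  toEquiv := τ.toEquiv
  map_fun' {k} f _ :=
    match k, f with
    | 0, _ => τ.map_one
    | 2, _ => τ.map_mul _ _
  map_rel' r := r.elim

theorem MulEquiv.realize_formula_comp {M N α : Type*} [Monoid M] [Monoid N] (τ : M ≃* N)
    (φ : L.Formula α) (v : α → M) : φ.Realize (τ ∘ v) ↔ φ.Realize v :=
  StrongHomClass.realize_formula τ.toLEquiv φ

theorem PSupp_finite {n : ℕ} (a : Fin n → ℕ+) : (PSupp a).Finite :=
  (Set.finite_iUnion fun i => (a i : ℕ).primeFactors.finite_toSet).subset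
    fun _ ⟨hp, i, hi⟩ => Set.mem_iUnion.2 ⟨i, Nat.mem_primeFactors.2 ⟨hp, hi, (a i).ne_zero⟩⟩

theorem mem_PSupp_iff {n : ℕ} {a : Fin n → ℕ+} (p : Nat.Primes) :
    (p : ℕ) ∈ PSupp a ↔ ∃ i, (p : ℕ+) ∣ a i := by
  simp [PSupp, PNat.dvd_iff, p.prop, Nat.Primes.coe_pnat_nat]

theorem mem_PSupp_mapPrimes_comp {n : ℕ} (e : Nat.Primes ≃ Nat.Primes) (b : Fin n → ℕ+)
    (p : Nat.Primes) : (p : ℕ) ∈ PSupp (PNat.mapPrimes e ∘ b) ↔ (e.symm p : ℕ) ∈ PSupp b := by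
  simp only [mem_PSupp_iff, Function.comp_apply, PNat.coe_dvd_mapPrimes_iff]

theorem mapPrimes_comp_eq_self {n : ℕ} (e : Nat.Primes ≃ Nat.Primes) {c : Fin n → ℕ+}
    (h : ∀ p : Nat.Primes, (p : ℕ) ∈ PSupp c → e p = p) : PNat.mapPrimes e ∘ c = c :=
  funext fun i => PNat.mapPrimes_apply_eq_self e fun p hp => h p ((mem_PSupp_iff p).2 ⟨i, hp⟩)

theorem inter_PSupp_mapPrimes_swap_comp {n : ℕ} {a b : Fin n → ℕ+} {p q : Nat.Primes}
    (hqa : (q : ℕ) ∉ PSupp a) (hqb : (q : ℕ) ∉ PSupp b) :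
    PSupp a ∩ PSupp (PNat.mapPrimes (Equiv.swap p q) ∘ b) = (PSupp a ∩ PSupp b) \ {(p : ℕ)} := by
  ext x
  by_cases hx : x.Prime
  swap
  · simp [PSupp, hx]
  obtain ⟨x, rfl⟩ : ∃ r : Nat.Primes, (r : ℕ) = x := ⟨⟨x, hx⟩, rfl⟩
  rw [Set.mem_inter_iff, mem_PSupp_mapPrimes_comp, Equiv.symm_swap]
  by_cases hxp : x = p
  · subst hxp
    simp [hqb]
  by_cases hxq : x = q
  · subst hxq
    simp [hqa]
  have hxp' : (x : ℕ) ≠ p := fun h => hxp (Subtype.ext h)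
  simp [Equiv.swap_apply_of_ne_of_ne hxp hxq, hxp']

section

variable {n : ℕ} {E : (Fin n → ℕ+) → (Fin n → ℕ+) → Prop}

theorem exists_rel_inter_PSupp_eq_diff_singleton (hE : Equivalence E)
    (hinv : ∀ (τ : ℕ+ ≃* ℕ+) u v, E u v → E (τ ∘ u) (τ ∘ v)) {a b c : Fin n → ℕ+}
    (hab : E a b) (hac : E a c) {p : ℕ} (hp : p.Prime) (hpc : p ∉ PSupp c) :
    ∃ b', E a b' ∧ PSupp a ∩ PSupp b' = (PSupp a ∩ PSupp b) \ {p} := by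
  obtain ⟨q, hq, hqabc⟩ := (Nat.infinite_setOfPred_prime.sdiff
    ((PSupp_finite a).union ((PSupp_finite b).union (PSupp_finite c)))).nonempty
  simp only [Set.mem_union, not_or] at hqabc
  obtain ⟨hqa, hqb, hqc⟩ := hqabc
  set τ := PNat.mapPrimes (Equiv.swap ⟨p, hp⟩ ⟨q, hq⟩)
  have hτc : τ ∘ c = c := mapPrimes_comp_eq_self _ fun r hr =>
    Equiv.swap_apply_of_ne_of_ne (fun h => hpc (by rwa [h] at hr))
      (fun h => hqc (by rwa [h] at hr))
  have hτac : E (τ ∘ a) c := hτc ▸ hinv τ a c hac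
  exact ⟨τ ∘ b, hE.trans hac (hE.trans (hE.symm hτac) (hinv τ a b hab)),
    inter_PSupp_mapPrimes_swap_comp hqa hqb⟩

theorem exists_rel_inter_PSupp_eq_diff (hE : Equivalence E)
    (hinv : ∀ (τ : ℕ+ ≃* ℕ+) u v, E u v → E (τ ∘ u) (τ ∘ v)) {a b : Fin n → ℕ+}
    (hab : E a b) {T : Set ℕ} (hT : T.Finite)
    (hTE : ∀ p ∈ T, p.Prime ∧ ∃ c, E a c ∧ p ∉ PSupp c) :
    ∃ b', E a b' ∧ PSupp a ∩ PSupp b' = (PSupp a ∩ PSupp b) \ T := by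
  induction T, hT using Set.Finite.induction_on with
  | empty => exact ⟨b, hab, (Set.sdiff_empty).symm⟩
  | @insert p T _ _ ih =>
    obtain ⟨b', hab', hb'⟩ := ih fun r hr => hTE r (Set.mem_insert_of_mem p hr)
    obtain ⟨hp, c, hac, hpc⟩ := hTE p (Set.mem_insert p T)
    obtain ⟨b'', hab'', hb''⟩ := exists_rel_inter_PSupp_eq_diff_singleton hE hinv hab' hac hp hpc
    refine ⟨b'', hab'', ?_⟩
    rw [hb'', hb', Set.sdiff_sdiff, Set.insert_eq, Set.union_comm]

end

/-- For a `∅`-definable equivalence relation `E` and any tuple `ā`, there is an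
`E`-equivalent tuple `ā'` with `σ(ā) ∩ σ(ā') = ⋂_{E(ā,b̄)} σ(b̄)`. -/
theorem equivalent_tuple_with_minimal_common_support (n : ℕ)
    (E : (Fin n → ℕ+) → (Fin n → ℕ+) → Prop) (hE : Equivalence E)
    (hdef : ∃ φ : L.Formula (Fin n ⊕ Fin n), ∀ a b, E a b ↔ φ.Realize (Sum.elim a b)) :
    ∀ a : Fin n → ℕ+, ∃ a' : Fin n → ℕ+, E a a' ∧
      PSupp a ∩ PSupp a' = ⋂ b ∈ {b | E a b}, PSupp b := by
  obtain ⟨φ, hφ⟩ := hdef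
  have hinv : ∀ (τ : ℕ+ ≃* ℕ+) u v, E u v → E (τ ∘ u) (τ ∘ v) := by
    intro τ u v
    rw [hφ, hφ, ← Sum.comp_elim, MulEquiv.realize_formula_comp]
    exact id
  intro a
  set S := ⋂ b ∈ {b | E a b}, PSupp b
  have hSa : S ⊆ PSupp a := Set.biInter_subset_of_mem (hE.refl a)
  obtain ⟨a', haa', ha'⟩ := exists_rel_inter_PSupp_eq_diff hE hinv (hE.refl a)
    ((PSupp_finite a).sdiff (t := S)) fun p hp => ⟨hp.1.1, by simpa [S] using hp.2⟩
  refine ⟨a', haa', ?_⟩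
  rw [ha', Set.inter_self, Set.sdiff_sdiff_cancel_left hSa]
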